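/- arXiv:2409.01705 — 6 statements merged into one kernel-verified Lean document; each statement's English description precedes it below -/
import Mathlib

section
/- Let (R, m) be a Noetherian local domain with m ≠ 0, let v be a real valuation on R centered at m, and let χ be a linearly bounded m-norm on R. For λ > 0 set a_λ(χ) := {f ∈ R : χ(f) ≥ λ} and, for an m-primary ideal I, set v(I) := inf{v(f) : f ∈ I, f ≠ 0}. Then, as the real number λ → ∞, the quotient v(a_λ(χ))/λ converges, and lim_{λ→∞} v(a_λ(χ))/λ = inf{ v(f)/χ(f) : f ∈ m, f ≠ 0 }. -/
open IsLocalRing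
open scoped ENNReal

variable {R : Type*} [CommRing R] [IsNoetherianRing R] [IsLocalRing R]

/-- An `m`-norm on a local ring `(R, m)`: `χ : R → [0, ∞]` with `χ(0) = ∞`, `χ(f) = ∞`
only for `f = 0`, `χ(-f) = χ(f)`, `χ(f+g) ≥ min(χ(f), χ(g))`, `χ(fg) ≥ χ(f) + χ(g)`,
`χ(f) ≥ 0`, and `χ(f) > 0` iff `f ∈ m`. -/
structure IsMNorm (R : Type*) [CommRing R] [IsLocalRing R] (χ : R → ℝ≥0∞) : Prop where
  map_zero : χ 0 = ⊤
  finite : ∀ f : R, χ f = ⊤ → f = 0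
  map_neg : ∀ f : R, χ (-f) = χ f
  map_add : ∀ f g : R, min (χ f) (χ g) ≤ χ (f + g)
  map_mul : ∀ f g : R, χ f + χ g ≤ χ (f * g)
  nonneg : ∀ f : R, 0 ≤ χ f
  pos_iff : ∀ f : R, 0 < χ f ↔ f ∈ maximalIdeal R

/-- `ord_m(f) = sup {k ∈ ℤ≥0 : f ∈ m^k}`, valued in `[0, ∞]`. -/
noncomputable def ordMax (R : Type*) [CommRing R] [IsLocalRing R] (f : R) : ℝ≥0∞ :=
  ⨆ (k : ℕ) (_ : f ∈ maximalIdeal R ^ k), (k : ℝ≥0∞)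

/-- A function `χ : R → [0, ∞]` is linearly bounded if `χ ≤ c⁻¹ · ord_m` for some `c > 0`. -/
def LinearlyBoundedNorm (R : Type*) [CommRing R] [IsLocalRing R] (χ : R → ℝ≥0∞) : Prop :=
  ∃ c : ℝ, 0 < c ∧ ∀ f : R, χ f ≤ ENNReal.ofReal c⁻¹ * ordMax R f

/-- A real valuation on `R` centered at `m`. -/
structure IsValuationAtMax (R : Type*) [CommRing R] [IsLocalRing R] (v : R → ℝ≥0∞) : Prop where
  map_zero : v 0 = ⊤
  finite : ∀ f : R, f ≠ 0 → v f ≠ ⊤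
  map_mul : ∀ f g : R, v (f * g) = v f + v g
  map_add : ∀ f g : R, min (v f) (v g) ≤ v (f + g)
  nonneg : ∀ f : R, 0 ≤ v f
  pos_iff : ∀ f : R, 0 < v f ↔ f ∈ maximalIdeal R

/-- For a real valuation `v` centered at `m` and a linearly bounded `m`-norm `χ`, the
quotients `v(a_λ(χ))/λ` converge as `λ → ∞` to `inf { v(f)/χ(f) : f ∈ m, f ≠ 0 }`,
where `a_λ(χ) = {f : χ(f) ≥ λ}` and `v(I) = inf {v(f) : f ∈ I, f ≠ 0}`. -/
theorem tendsto_valuation_of_filtration [IsDomain R] (hm : maximalIdeal R ≠ ⊥)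
    (v : R → ℝ≥0∞) (hv : IsValuationAtMax R v)
    (χ : R → ℝ≥0∞) (hχ : IsMNorm R χ) (hlb : LinearlyBoundedNorm R χ) :
    Filter.Tendsto
      (fun lam : ℝ =>
        (⨅ f ∈ {g : R | ENNReal.ofReal lam ≤ χ g ∧ g ≠ 0}, v f) / ENNReal.ofReal lam)
      Filter.atTop
      (nhds (⨅ f ∈ {g : R | g ∈ maximalIdeal R ∧ g ≠ 0}, v f / χ f)) := by
  classical
  have hv1 : v 1 = 0 := by
    have h := hv.map_mul 1 1
    rw [one_mul] at h
    have h1 : v 1 ≠ ⊤ := hv.finite 1 one_ne_zero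
    exact ((ENNReal.add_right_inj h1).mp (by rw [← h, add_zero])).symm
  have hvpow : ∀ (f : R) (n : ℕ), v (f ^ n) = n * v f := by
    intro f n
    induction n with
    | zero => simp [hv1]
    | succ n ih =>
      rw [pow_succ, hv.map_mul, ih]
      push_cast
      ring
  have hχpow : ∀ (f : R) (n : ℕ), (n : ℝ≥0∞) * χ f ≤ χ (f ^ n) := by
    intro f n
    induction n with
    | zero => simp
    | succ n ih =>
      calc ((n + 1 : ℕ) : ℝ≥0∞) * χ f = (n : ℝ≥0∞) * χ f + χ f := by push_cast; ring
        _ ≤ χ (f ^ n) + χ f := by gcongr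
        _ ≤ χ (f ^ n * f) := hχ.map_mul _ _
        _ = χ (f ^ (n + 1)) := by rw [pow_succ]
  rw [tendsto_order]
  constructor
  · intro a ha
    filter_upwards [Filter.eventually_gt_atTop (0 : ℝ)] with lam hlam
    refine lt_of_lt_of_le ha ?_
    have hc0 : ENNReal.ofReal lam ≠ 0 := (ENNReal.ofReal_pos.2 hlam).ne'
    have hct : ENNReal.ofReal lam ≠ ⊤ := ENNReal.ofReal_ne_top
    rw [ENNReal.le_div_iff_mul_le (Or.inl hc0) (Or.inl hct)]
    refine le_iInf₂ fun f hf => ?_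
    obtain ⟨hfχ, hf0⟩ := hf
    have hfm : f ∈ maximalIdeal R :=
      (hχ.pos_iff f).1 (lt_of_lt_of_le (ENNReal.ofReal_pos.2 hlam) hfχ)
    have hχf0 : χ f ≠ 0 := ((hχ.pos_iff f).2 hfm).ne'
    have hχft : χ f ≠ ⊤ := fun h => hf0 (hχ.finite f h)
    have hLle : (⨅ g ∈ {g : R | g ∈ maximalIdeal R ∧ g ≠ 0}, v g / χ g) ≤ v f / χ f :=
      iInf₂_le f ⟨hfm, hf0⟩
    calc (⨅ g ∈ {g : R | g ∈ maximalIdeal R ∧ g ≠ 0}, v g / χ g) * ENNReal.ofReal lam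
        ≤ (v f / χ f) * χ f := by gcongr
      _ = v f := ENNReal.div_mul_cancel hχf0 hχft
  · intro b hb
    obtain ⟨f, hfb⟩ := iInf_lt_iff.mp hb
    obtain ⟨hfS, hvb⟩ := iInf_lt_iff.mp hfb
    obtain ⟨hfm, hf0⟩ := hfS
    have hq : v f ≠ ⊤ := hv.finite f hf0
    have hc0 : χ f ≠ 0 := ((hχ.pos_iff f).2 hfm).ne'
    have hct : χ f ≠ ⊤ := fun h => hf0 (hχ.finite f h)
    have hcr : 0 < (χ f).toReal := ENNReal.toReal_pos hc0 hct
    obtain ⟨ε, hε0, hεb⟩ := ENNReal.lt_iff_exists_add_pos_lt.mp hvb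
    have hεne : (ε : ℝ≥0∞) ≠ 0 := ENNReal.coe_ne_zero.2 hε0.ne'
    filter_upwards [Filter.eventually_gt_atTop (max 1 ((v f / (ε : ℝ≥0∞)).toReal))]
      with lam hlam
    have hlam0 : 0 < lam := lt_of_le_of_lt (le_max_left _ _) hlam |>.trans' zero_lt_one
    have hl0 : ENNReal.ofReal lam ≠ 0 := (ENNReal.ofReal_pos.2 hlam0).ne'
    have hlt : ENNReal.ofReal lam ≠ ⊤ := ENNReal.ofReal_ne_top
    have hqε : v f / ENNReal.ofReal lam < ε := by
      have h1 : v f / (ε : ℝ≥0∞) < ENNReal.ofReal lam := by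
        rw [ENNReal.lt_ofReal_iff_toReal_lt (ENNReal.div_lt_top hq hεne).ne]
        exact lt_of_le_of_lt (le_max_right _ _) hlam
      rw [ENNReal.div_lt_iff (Or.inl hεne) (Or.inl ENNReal.coe_ne_top)] at h1
      rw [ENNReal.div_lt_iff (Or.inl hl0) (Or.inl hlt)]
      rwa [mul_comm] at h1
    set n : ℕ := ⌈lam / (χ f).toReal⌉₊ with hn
    have hn1 : lam / (χ f).toReal ≤ (n : ℝ) := Nat.le_ceil _
    have hn2 : (n : ℝ) ≤ lam / (χ f).toReal + 1 :=
      le_of_lt (Nat.ceil_lt_add_one (by positivity))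
    have hfn0 : f ^ n ≠ 0 := pow_ne_zero _ hf0
    have hmem : ENNReal.ofReal lam ≤ χ (f ^ n) := by
      refine le_trans ?_ (hχpow f n)
      have hle : lam ≤ (n : ℝ) * (χ f).toReal := by
        rw [div_le_iff₀ hcr] at hn1; linarith
      calc ENNReal.ofReal lam ≤ ENNReal.ofReal ((n : ℝ) * (χ f).toReal) :=
            ENNReal.ofReal_le_ofReal hle
        _ = (n : ℝ≥0∞) * χ f := by
            rw [ENNReal.ofReal_mul (by positivity), ENNReal.ofReal_natCast,
              ENNReal.ofReal_toReal hct]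
    have hF : (⨅ g ∈ {g : R | ENNReal.ofReal lam ≤ χ g ∧ g ≠ 0}, v g) ≤ (n : ℝ≥0∞) * v f := by
      refine le_trans (iInf₂_le (f ^ n) ⟨hmem, hfn0⟩) ?_
      rw [hvpow]
    refine lt_of_le_of_lt (ENNReal.div_le_div_right hF _) ?_
    have hnle : (n : ℝ≥0∞) ≤ ENNReal.ofReal lam / χ f + 1 := by
      calc (n : ℝ≥0∞) = ENNReal.ofReal (n : ℝ) := (ENNReal.ofReal_natCast n).symm
        _ ≤ ENNReal.ofReal (lam / (χ f).toReal + 1) := ENNReal.ofReal_le_ofReal hn2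
        _ = ENNReal.ofReal lam / χ f + 1 := by
            rw [ENNReal.ofReal_add (by positivity) zero_le_one,
              ENNReal.ofReal_div_of_pos hcr, ENNReal.ofReal_toReal hct, ENNReal.ofReal_one]
    calc (n : ℝ≥0∞) * v f / ENNReal.ofReal lam
        ≤ (ENNReal.ofReal lam / χ f + 1) * v f / ENNReal.ofReal lam := by gcongr
      _ = (v f / χ f * ENNReal.ofReal lam + v f) / ENNReal.ofReal lam := by
          simp only [div_eq_mul_inv, add_mul, one_mul]
          ring_nf
      _ = v f / χ f * ENNReal.ofReal lam / ENNReal.ofReal lam + v f / ENNReal.ofReal lam :=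
          ENNReal.add_div
      _ = v f / χ f + v f / ENNReal.ofReal lam := by
          rw [mul_div_assoc, ENNReal.div_self hl0 hlt, mul_one]
      _ < v f / χ f + ε := ENNReal.add_lt_add_left (ENNReal.div_lt_top hq hc0).ne hqε
      _ < b := hεb
end

section
/- Let (R, m) be a Noetherian local ring of Krull dimension n, and let a_•, b_•, c_• be m-filtrations on R. Suppose there are real numbers e_a, e_b, e_c, e_{ab}, e_{bc}, e_{ac} such that, as the positive integer m → ∞, n!·ℓ_R(R/a_m)/m^n → e_a, n!·ℓ_R(R/b_m)/m^n → e_b, n!·ℓ_R(R/c_m)/m^n → e_c, n!·ℓ_R(R/(a_m ∩ b_m))/m^n → e_{ab}, n!·ℓ_R(R/(b_m ∩ c_m))/m^n → e_{bc}, and n!·ℓ_R(R/(a_m ∩ c_m))/m^n → e_{ac}. Then 2e_{ac} − e_a − e_c ≤ (2e_{ab} − e_a − e_b) + (2e_{bc} − e_b − e_c); that is, the function d_1 defined by d_1(a_•, b_•) := 2e(a_•∩b_•) − e(a_•) − e(b_•) satisfies the triangle inequality. -/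
/-! Colengths are lengths of finite-length modules, and length is additive along the exact
sequence `0 → R/(I ∩ J) → R/I × R/J → R/(I + J) → 0`. As `a ∩ c ⊇ (a ∩ b) ∩ (b ∩ c)` and
`b ⊇ (a ∩ b) + (b ∩ c)`, this gives
`ℓ(R/(aₘ ∩ cₘ)) + ℓ(R/bₘ) ≤ ℓ(R/(aₘ ∩ bₘ)) + ℓ(R/(bₘ ∩ cₘ))` for every `m`; normalizing and
passing to the limit yields `e_ac + e_b ≤ e_ab + e_bc`, which is the triangle inequality. -/

open IsLocalRing

variable {R : Type*} [CommRing R] [IsNoetherianRing R] [IsLocalRing R]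

/-- An ideal is `m`-primary: proper with radical the maximal ideal. -/
def IsPrimaryToMax (R : Type*) [CommRing R] [IsLocalRing R] (I : Ideal R) : Prop :=
  I ≠ ⊤ ∧ I.radical = maximalIdeal R

/-- An `m`-filtration on a Noetherian local ring `(R, m)`: a family of `m`-primary ideals
indexed by `ℝ` (only the values at `λ > 0` matter, with the convention `a 0 = R`),
decreasing, left-continuous and multiplicative. -/
structure IsMFiltration (R : Type*) [CommRing R] [IsLocalRing R] (a : ℝ → Ideal R) : Prop where
  primary : ∀ lam : ℝ, 0 < lam → IsPrimaryToMax R (a lam)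
  antitone : ∀ lam mu : ℝ, 0 < mu → mu < lam → a lam ≤ a mu
  left_cont : ∀ lam : ℝ, 0 < lam → ∃ ε > (0 : ℝ), ∀ ε' : ℝ, 0 < ε' → ε' ≤ ε →
    a (lam - ε') = a lam
  mul : ∀ lam mu : ℝ, 0 < lam → 0 < mu → a lam * a mu ≤ a (lam + mu)
  zero : a 0 = ⊤

/-- The length `ℓ_R(R/I)` as a real number: the supremum of lengths of strictly
increasing chains of submodules of `R/I` (Krull dimension of the submodule lattice),
truncated to a natural number (it is finite for `m`-primary `I`) and cast to `ℝ`. -/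
noncomputable def colengthR (R : Type*) [CommRing R] (I : Ideal R) : ℝ :=
  ((WithBot.unbotD 0 (Order.krullDim (Submodule R (R ⧸ I)))).toNat : ℝ)

namespace Submodule

variable {A M : Type*} [Ring A] [AddCommGroup M] [Module A M]

theorem length_quotient_antitone {N N' : Submodule A M} (h : N ≤ N') :
    Module.length A (M ⧸ N') ≤ Module.length A (M ⧸ N) :=
  Module.length_le_of_surjective _ (factor_surjective h)

theorem length_quotient_inf_add_length_quotient_sup (N₁ N₂ : Submodule A M) :
    Module.length A (M ⧸ N₁ ⊓ N₂) + Module.length A (M ⧸ N₁ ⊔ N₂) =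
      Module.length A (M ⧸ N₁) + Module.length A (M ⧸ N₂) := by
  let f : M ⧸ N₁ ⊓ N₂ →ₗ[A] (M ⧸ N₁) × (M ⧸ N₂) :=
    (factor inf_le_left).prod (factor inf_le_right)
  let g : (M ⧸ N₁) × (M ⧸ N₂) →ₗ[A] M ⧸ N₁ ⊔ N₂ :=
    (factor le_sup_left).coprod (-factor le_sup_right)
  have hf : Function.Injective f := by
    rw [← LinearMap.ker_eq_bot, LinearMap.ker_eq_bot']
    intro q hq
    obtain ⟨x, rfl⟩ := Quotient.mk_surjective _ q
    simp_all [f]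
  have hg : Function.Surjective g := by
    intro q
    obtain ⟨x, rfl⟩ := Quotient.mk_surjective _ q
    exact ⟨(Quotient.mk x, 0), by simp [g]⟩
  have hfg : Function.Exact f g := by
    rintro ⟨q₁, q₂⟩
    obtain ⟨x, rfl⟩ := Quotient.mk_surjective _ q₁
    obtain ⟨y, rfl⟩ := Quotient.mk_surjective _ q₂
    simp only [f, g, LinearMap.coprod_apply, LinearMap.neg_apply, mapQ_apply, LinearMap.id_coe,
      id_eq, Set.mem_range, LinearMap.prod_apply, Function.prod_apply, Prod.mk.injEq]
    rw [← Quotient.mk_neg, ← Quotient.mk_add, Quotient.mk_eq_zero, ← sub_eq_add_neg, mem_sup]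
    constructor
    · rintro ⟨n₁, hn₁, n₂, hn₂, hxy⟩
      refine ⟨Quotient.mk (x - n₁), (Quotient.eq _).mpr ?_, (Quotient.eq _).mpr ?_⟩
      · simpa using hn₁
      · rwa [LinearMap.id_apply, sub_right_comm, ← hxy, add_sub_cancel_left]
    · rintro ⟨q, hq₁, hq₂⟩
      obtain ⟨z, rfl⟩ := Quotient.mk_surjective _ q
      rw [mapQ_apply, LinearMap.id_coe, id_eq, Quotient.eq] at hq₁ hq₂
      exact ⟨x - z, neg_sub z x ▸ N₁.neg_mem hq₁, z - y, hq₂, sub_add_sub_cancel x z y⟩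
  rw [← Module.length_eq_add_of_exact f g hf hg hfg, Module.length_prod]

theorem length_quotient_inf_add_length_quotient_le (N₁ N₂ N₃ : Submodule A M) :
    Module.length A (M ⧸ N₁ ⊓ N₃) + Module.length A (M ⧸ N₂) ≤
      Module.length A (M ⧸ N₁ ⊓ N₂) + Module.length A (M ⧸ N₂ ⊓ N₃) :=
  calc Module.length A (M ⧸ N₁ ⊓ N₃) + Module.length A (M ⧸ N₂)
      ≤ Module.length A (M ⧸ (N₁ ⊓ N₂) ⊓ (N₂ ⊓ N₃)) +
          Module.length A (M ⧸ (N₁ ⊓ N₂) ⊔ (N₂ ⊓ N₃)) := by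
        gcongr <;> apply length_quotient_antitone
        · exact inf_le_inf inf_le_left inf_le_right
        · exact sup_le inf_le_right inf_le_left
    _ = Module.length A (M ⧸ N₁ ⊓ N₂) + Module.length A (M ⧸ N₂ ⊓ N₃) :=
        length_quotient_inf_add_length_quotient_sup _ _

end Submodule

theorem colengthR_eq_toNat_length {A : Type*} [CommRing A] (I : Ideal A) :
    colengthR A I = (Module.length A (A ⧸ I)).toNat := by
  rw [colengthR, ← Module.coe_length, WithBot.unbotD_coe]

theorem length_quotient_ne_top_of_radical_eq_maximalIdeal {I : Ideal R}
    (hI : I.radical = maximalIdeal R) : Module.length R (R ⧸ I) ≠ ⊤ := by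
  have : IsArtinianRing (R ⧸ I) := quotient_artinian_of_mem_minimalPrimes_of_isLocalRing I <| by
    rw [← Ideal.radical_minimalPrimes, hI, Ideal.minimalPrimes_eq_subsingleton_self]
    rfl
  have : IsArtinian R (R ⧸ I) :=
    isArtinian_of_surjective_algebraMap (Ideal.Quotient.mk_surjective (I := I))
  exact Module.length_ne_top

namespace IsMFiltration

variable {a b c : ℝ → Ideal R} {t : ℝ}

theorem length_quotient_inf_ne_top (ha : IsMFiltration R a) (hb : IsMFiltration R b)
    (ht : 0 < t) : Module.length R (R ⧸ a t ⊓ b t) ≠ ⊤ :=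
  length_quotient_ne_top_of_radical_eq_maximalIdeal <| by
    rw [Ideal.radical_inf, (ha.primary t ht).2, (hb.primary t ht).2, inf_idem]

theorem colengthR_inf_add_colengthR_le (ha : IsMFiltration R a) (hb : IsMFiltration R b)
    (hc : IsMFiltration R c) (ht : 0 < t) :
    colengthR R (a t ⊓ c t) + colengthR R (b t) ≤
      colengthR R (a t ⊓ b t) + colengthR R (b t ⊓ c t) := by
  have hle := Submodule.length_quotient_inf_add_length_quotient_le (a t) (b t) (c t)
  have hab := ha.length_quotient_inf_ne_top hb ht
  have hbc := hb.length_quotient_inf_ne_top hc ht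
  have hfin := WithTop.add_ne_top.mpr ⟨hab, hbc⟩
  obtain ⟨hac, hbfin⟩ := WithTop.add_ne_top.mp (ne_top_of_le_ne_top hfin hle)
  simp only [colengthR_eq_toNat_length]
  rw [← Nat.cast_add, ← Nat.cast_add, Nat.cast_le, ← ENat.toNat_add hac hbfin,
    ← ENat.toNat_add hab hbc]
  exact ENat.toNat_le_toNat hle hfin

end IsMFiltration

theorem d1_triangle_ineq_general (n : ℕ)
    (a b c : ℝ → Ideal R)
    (ha : IsMFiltration R a) (hb : IsMFiltration R b) (hc : IsMFiltration R c)
    (ea eb ec eab ebc eac : ℝ)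
    (heb : Filter.Tendsto (fun m : ℕ =>
      (n.factorial : ℝ) * colengthR R (b m) / (m : ℝ) ^ n) Filter.atTop (nhds eb))
    (heab : Filter.Tendsto (fun m : ℕ =>
      (n.factorial : ℝ) * colengthR R (a m ⊓ b m) / (m : ℝ) ^ n) Filter.atTop (nhds eab))
    (hebc : Filter.Tendsto (fun m : ℕ =>
      (n.factorial : ℝ) * colengthR R (b m ⊓ c m) / (m : ℝ) ^ n) Filter.atTop (nhds ebc))
    (heac : Filter.Tendsto (fun m : ℕ =>
      (n.factorial : ℝ) * colengthR R (a m ⊓ c m) / (m : ℝ) ^ n) Filter.atTop (nhds eac)) :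
    2 * eac - ea - ec ≤ (2 * eab - ea - eb) + (2 * ebc - eb - ec) := by
  have hle : eac + eb ≤ eab + ebc := by
    refine le_of_tendsto_of_tendsto (heac.add heb) (heab.add hebc) ?_
    filter_upwards [Filter.eventually_gt_atTop 0] with m hm
    rw [← add_div, ← add_div, ← mul_add, ← mul_add]
    gcongr (n.factorial : ℝ) * ?_ / _
    exact ha.colengthR_inf_add_colengthR_le hb hc (Nat.cast_pos.mpr hm)
  linarith

/-- Triangle inequality for `d₁`: if the normalized colengths of the filtrations
`a_•`, `b_•`, `c_•` and of their pairwise intersections converge (to the multiplicities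
`e(·)`), then `d₁(a_•, c_•) ≤ d₁(a_•, b_•) + d₁(b_•, c_•)`, where
`d₁(a_•, b_•) = 2e(a_• ∩ b_•) − e(a_•) − e(b_•)`. -/
theorem d1_triangle_ineq (n : ℕ) (hdim : ringKrullDim R = n)
    (a b c : ℝ → Ideal R)
    (ha : IsMFiltration R a) (hb : IsMFiltration R b) (hc : IsMFiltration R c)
    (ea eb ec eab ebc eac : ℝ)
    (hea : Filter.Tendsto (fun m : ℕ =>
      (n.factorial : ℝ) * colengthR R (a m) / (m : ℝ) ^ n) Filter.atTop (nhds ea))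
    (heb : Filter.Tendsto (fun m : ℕ =>
      (n.factorial : ℝ) * colengthR R (b m) / (m : ℝ) ^ n) Filter.atTop (nhds eb))
    (hec : Filter.Tendsto (fun m : ℕ =>
      (n.factorial : ℝ) * colengthR R (c m) / (m : ℝ) ^ n) Filter.atTop (nhds ec))
    (heab : Filter.Tendsto (fun m : ℕ =>
      (n.factorial : ℝ) * colengthR R (a m ⊓ b m) / (m : ℝ) ^ n) Filter.atTop (nhds eab))
    (hebc : Filter.Tendsto (fun m : ℕ =>
      (n.factorial : ℝ) * colengthR R (b m ⊓ c m) / (m : ℝ) ^ n) Filter.atTop (nhds ebc))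
    (heac : Filter.Tendsto (fun m : ℕ =>
      (n.factorial : ℝ) * colengthR R (a m ⊓ c m) / (m : ℝ) ^ n) Filter.atTop (nhds eac)) :
    2 * eac - ea - ec ≤ (2 * eab - ea - eb) + (2 * ebc - eb - ec) :=
  d1_triangle_ineq_general n a b c ha hb hc ea eb ec eab ebc eac heb heab hebc heac
end

section
/- Let (R, m) be a Noetherian local ring, let a_{•,0} and a_{•,1} be m-filtrations on R, and let (a_{•,t})_{t∈[0,1]} be the geodesic between them. Then for all 0 ≤ t < t' ≤ 1 and all λ > 0, a_{λ,0} ∩ a_{λ,t'} ⊆ a_{λ,t}. -/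
open IsLocalRing

variable {R : Type*} [CommRing R] [IsNoetherianRing R] [IsLocalRing R]

/-- The geodesic between two `m`-filtrations `a₀` and `a₁` at time `t`:
`a_{λ,t} = Σ_{μ,ν ≥ 0, (1−t)μ + tν = λ} (a₀_μ ∩ a₁_ν)` (sum of ideals, i.e. supremum
over all such pairs `(μ, ν)` of nonnegative reals). -/
noncomputable def geodesic {R : Type*} [CommRing R] (a₀ a₁ : ℝ → Ideal R)
    (t lam : ℝ) : Ideal R :=
  ⨆ (p : ℝ × ℝ) (_ : 0 ≤ p.1 ∧ 0 ≤ p.2 ∧ (1 - t) * p.1 + t * p.2 = lam),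
    (a₀ p.1 ⊓ a₁ p.2)

/-!
Split the terms `a₀_μ ∩ a₁_ν` of `a_{λ,t'}` according to whether `ν ≤ μ` or `μ < ν`; in both
cases `λ = (1 - t')μ + t'ν` lies between `μ` and `ν`. If `ν ≤ μ`, the term lies in `a₀_λ`, and
lowering `μ` to the `μ'` with `(1 - t)μ' + tν = λ` puts it into `a_{λ,t}`. If `μ < ν`, the term
lies in `a₁_λ`. Hence `a_{λ,t'} ⊆ (a₀_λ ∩ a_{λ,t}) + a₁_λ`, and the modular law gives
`a₀_λ ∩ a_{λ,t'} ⊆ (a₀_λ ∩ a_{λ,t}) + (a₀_λ ∩ a₁_λ) ⊆ a_{λ,t}`.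
-/

lemma IsMFiltration.antitoneOn {A : Type*} [CommRing A] [IsLocalRing A] {a : ℝ → Ideal A}
    (h : IsMFiltration A a) : AntitoneOn a (Set.Ici 0) := by
  intro mu hmu lam _ hml
  rcases (Set.mem_Ici.1 hmu).eq_or_lt with rfl | hmu_pos
  · simp [h.zero]
  rcases hml.eq_or_lt with rfl | hlt
  · exact le_rfl
  · exact h.antitone lam mu hmu_pos hlt

section Geodesic

variable {A : Type*} [CommRing A] {a₀ a₁ : ℝ → Ideal A} {t lam mu nu : ℝ}

lemma inf_le_geodesic (hmu : 0 ≤ mu) (hnu : 0 ≤ nu) (h : (1 - t) * mu + t * nu = lam) :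
    a₀ mu ⊓ a₁ nu ≤ geodesic a₀ a₁ t lam :=
  le_iSup₂_of_le (mu, nu) ⟨hmu, hnu, h⟩ le_rfl

lemma inf_le_geodesic_of_le (ha₀ : AntitoneOn a₀ (Set.Ici 0)) (ht1 : t < 1)
    (hnu : 0 ≤ nu) (hnu_le : nu ≤ lam) (hlam_le : lam ≤ (1 - t) * mu + t * nu) :
    a₀ mu ⊓ a₁ nu ≤ geodesic a₀ a₁ t lam := by
  have h1t : 0 < 1 - t := by linarith
  set mu' := (lam - t * nu) / (1 - t) with hmu'
  have hmu'_nonneg : 0 ≤ mu' := div_nonneg (by nlinarith) h1t.le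
  have hmu'_le : mu' ≤ mu := by rw [hmu', div_le_iff₀ h1t]; linarith
  have hmu'_eq : (1 - t) * mu' + t * nu = lam := by rw [hmu']; field_simp; ring
  calc a₀ mu ⊓ a₁ nu ≤ a₀ mu' ⊓ a₁ nu :=
        inf_le_inf_right _ (ha₀ hmu'_nonneg (hmu'_nonneg.trans hmu'_le) hmu'_le)
    _ ≤ geodesic a₀ a₁ t lam := inf_le_geodesic hmu'_nonneg hnu hmu'_eq

lemma geodesic_le_inf_geodesic_sup (ha₀ : AntitoneOn a₀ (Set.Ici 0))
    (ha₁ : AntitoneOn a₁ (Set.Ici 0)) {t' : ℝ} (htt' : t < t') (ht'0 : 0 ≤ t') (ht'1 : t' ≤ 1) :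
    geodesic a₀ a₁ t' lam ≤ a₀ lam ⊓ geodesic a₀ a₁ t lam ⊔ a₁ lam := by
  refine iSup₂_le fun ⟨mu, nu⟩ ⟨hmu, hnu, heq⟩ => ?_
  rcases le_or_gt nu mu with hle | hlt
  · have hnu_le : nu ≤ lam := by nlinarith
    have hlam_le : lam ≤ mu := by nlinarith
    refine le_sup_of_le_left (le_inf ?_ ?_)
    · exact inf_le_left.trans (ha₀ (hnu.trans hnu_le) hmu hlam_le)
    · exact inf_le_geodesic_of_le ha₀ (htt'.trans_le ht'1) hnu hnu_le (by nlinarith)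
  · have hmu_le : mu ≤ lam := by nlinarith
    have hlam_le : lam ≤ nu := by nlinarith
    exact le_sup_of_le_right (inf_le_right.trans (ha₁ (hmu.trans hmu_le) hnu hlam_le))

end Geodesic

/-- Along the geodesic `(a_{•,t})_{t ∈ [0,1]}` between `m`-filtrations `a₀ = a_{•,0}` and
`a₁ = a_{•,1}`, for `0 ≤ t < t' ≤ 1` and `λ > 0` one has `a_{λ,0} ∩ a_{λ,t'} ⊆ a_{λ,t}`. -/
theorem geodesic_subinterval (a₀ a₁ : ℝ → Ideal R)
    (h₀ : IsMFiltration R a₀) (h₁ : IsMFiltration R a₁)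
    (t t' : ℝ) (ht : 0 ≤ t) (htt' : t < t') (ht' : t' ≤ 1) :
    ∀ lam : ℝ, 0 < lam →
      a₀ lam ⊓ geodesic a₀ a₁ t' lam ≤ geodesic a₀ a₁ t lam := by
  intro lam hlam
  have hsplit := geodesic_le_inf_geodesic_sup (lam := lam) h₀.antitoneOn h₁.antitoneOn htt'
    (ht.trans htt'.le) ht'
  calc a₀ lam ⊓ geodesic a₀ a₁ t' lam
      ≤ a₀ lam ⊓ (a₀ lam ⊓ geodesic a₀ a₁ t lam ⊔ a₁ lam) := inf_le_inf_left _ hsplit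
    _ = a₀ lam ⊓ geodesic a₀ a₁ t lam ⊔ a₀ lam ⊓ a₁ lam := by
        rw [inf_comm, sup_inf_assoc_of_le _ inf_le_left, inf_comm (a₁ lam)]
    _ ≤ geodesic a₀ a₁ t lam :=
        sup_le inf_le_right (inf_le_geodesic hlam.le hlam.le (by ring))
end

section
/- Let (R, m) be a Noetherian local domain and let ρ, ρ' be homogeneous linearly bounded m-norms on R. Then there exists M > 0 such that M^{−1}·d_{∞,ρ}(χ, χ') ≤ d_{∞,ρ'}(χ, χ') ≤ M·d_{∞,ρ}(χ, χ') for all linearly bounded m-norms χ, χ' on R. -/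
open IsLocalRing
open scoped ENNReal

variable {R : Type*} [CommRing R] [IsNoetherianRing R] [IsLocalRing R]

/-- `χ` is homogeneous (power-multiplicative): `χ(f^d) = d·χ(f)` for all integers `d ≥ 1`. -/
def IsHomogeneousNorm (R : Type*) [CommRing R] (χ : R → ℝ≥0∞) : Prop :=
  ∀ f : R, ∀ d : ℕ, 1 ≤ d → χ (f ^ d) = (d : ℝ≥0∞) * χ f

/-- `d_{∞,ρ}(χ, χ') = limsup_{λ→∞} sup { |χ(f) − χ'(f)|/ρ(f) : f ∈ R, ρ(f) ≥ λ }`,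
where `|x − y|` denotes `max (x - y) (y - x)` in `[0, ∞]`. -/
noncomputable def dInfty {R : Type*} [CommRing R] (ρ χ χ' : R → ℝ≥0∞) : ℝ≥0∞ :=
  Filter.limsup
    (fun lam : ℝ => ⨆ f ∈ {g : R | ENNReal.ofReal lam ≤ ρ g},
      (max (χ f - χ' f) (χ' f - χ f)) / ρ f)
    Filter.atTop

set_option linter.unusedSectionVars false
set_option linter.unusedVariables false

/-- The sublevel ideal `{f | a ≤ χ f}` of an m-norm. -/
def IsMNorm.levelIdeal {χ : R → ℝ≥0∞} (hχ : IsMNorm R χ) (a : ℝ≥0∞) : Ideal R where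
  carrier := {f | a ≤ χ f}
  add_mem' := fun {x y} hx hy => le_trans (le_min hx hy) (hχ.map_add x y)
  zero_mem' := by simp [Set.mem_setOf_eq, hχ.map_zero]
  smul_mem' := fun c x hx => by
    refine le_trans (le_trans hx ?_) (hχ.map_mul c x)
    exact le_add_self

theorem IsMNorm.ord_le {χ : R → ℝ≥0∞} (hχ : IsMNorm R χ) :
    ∃ ε : ℝ, 0 < ε ∧ ∀ f : R, ENNReal.ofReal ε * ordMax R f ≤ χ f := by
  obtain ⟨S, hS⟩ := IsNoetherian.noetherian (maximalIdeal R)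
  set δ : ℝ≥0∞ := S.inf (fun x => χ x) ⊓ 1 with hδ
  have hδ1 : δ ≤ 1 := inf_le_right
  have hδpos : 0 < δ := by
    refine lt_inf_iff.mpr ⟨?_, zero_lt_one⟩
    refine (Finset.lt_inf_iff (by simp)).mpr fun x hx => ?_
    exact (hχ.pos_iff x).mpr (hS ▸ Submodule.subset_span hx)
  have hδtop : δ ≠ ⊤ := ne_top_of_le_ne_top ENNReal.one_ne_top hδ1
  refine ⟨δ.toReal, ENNReal.toReal_pos hδpos.ne' hδtop, fun f => ?_⟩
  rw [ENNReal.ofReal_toReal hδtop]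
  have key : ∀ k : ℕ, ∀ g ∈ maximalIdeal R ^ k, (k : ℝ≥0∞) * δ ≤ χ g := by
    intro k
    induction k with
    | zero => intro g _; simp
    | succ n ih =>
      have h1 : maximalIdeal R ≤ hχ.levelIdeal δ := by
        rw [← hS, Submodule.span_le]
        intro x hx
        show δ ≤ χ x
        exact le_trans inf_le_left (Finset.inf_le hx)
      have : maximalIdeal R ^ (n + 1) ≤ hχ.levelIdeal ((n + 1 : ℕ) * δ) := by
        rw [pow_succ]
        refine Ideal.mul_le.mpr fun r hr s hs => ?_
        have hr' : (n : ℝ≥0∞) * δ ≤ χ r := ih r hr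
        have hs' : δ ≤ χ s := h1 hs
        refine le_trans ?_ (hχ.map_mul r s)
        push_cast
        rw [add_mul, one_mul]
        exact add_le_add hr' hs'
      exact fun g hg => this hg
  unfold ordMax
  rw [ENNReal.mul_iSup]
  refine iSup_le fun k => ?_
  rw [ENNReal.mul_iSup]
  refine iSup_le fun hk => ?_
  rw [mul_comm]
  exact key k f hk

theorem limsup_antitone_eq_iInf {g : ℝ → ℝ≥0∞} (hg : Antitone g) :
    Filter.limsup g Filter.atTop = ⨅ lam : ℝ, g lam := by
  refine le_antisymm (le_iInf fun lam => ?_) ?_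
  · refine Filter.limsup_le_of_le (by isBoundedDefault) ?_
    filter_upwards [Filter.eventually_ge_atTop lam] with x hx
    exact hg hx
  · refine Filter.le_limsup_of_frequently_le' ?_
    exact Filter.Frequently.of_forall fun x => iInf_le_of_le x le_rfl

theorem dInfty_eq_iInf {R : Type*} [CommRing R] (ρ χ χ' : R → ℝ≥0∞) :
    dInfty ρ χ χ' = ⨅ lam : ℝ,
      ⨆ f ∈ {g : R | ENNReal.ofReal lam ≤ ρ g},
        (max (χ f - χ' f) (χ' f - χ f)) / ρ f := by
  refine limsup_antitone_eq_iInf fun a b hab => ?_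
  refine iSup_le fun f => iSup_le fun hf => ?_
  exact le_iSup₂_of_le f (le_trans (ENNReal.ofReal_le_ofReal hab) hf) le_rfl

-- pointwise numerator vanishing
theorem mnorm_eq_zero_of_notMem {χ : R → ℝ≥0∞} (hχ : IsMNorm R χ) {f : R}
    (hf : f ∉ maximalIdeal R) : χ f = 0 := by
  by_contra h
  exact hf ((hχ.pos_iff f).mp (pos_iff_ne_zero.mpr h))

theorem dInfty_le_mul {ρ ρ' χ χ' : R → ℝ≥0∞} (hρ : IsMNorm R ρ) (hρ' : IsMNorm R ρ')
    (hχ : IsMNorm R χ) (hχ' : IsMNorm R χ') {K : ℝ} (hK : 0 < K)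
    (h1 : ∀ f : R, ρ' f ≤ ENNReal.ofReal K * ρ f)
    (h2 : ∀ f : R, ρ f ≤ ENNReal.ofReal K * ρ' f) :
    dInfty ρ' χ χ' ≤ ENNReal.ofReal K * dInfty ρ χ χ' := by
  set N : R → ℝ≥0∞ := fun f => max (χ f - χ' f) (χ' f - χ f) with hN
  have hK0 : ENNReal.ofReal K ≠ 0 := by simp [hK, hK.le]
  have hKt : ENNReal.ofReal K ≠ ⊤ := ENNReal.ofReal_ne_top
  -- pointwise
  have hpt : ∀ f : R, N f / ρ' f ≤ ENNReal.ofReal K * (N f / ρ f) := by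
    intro f
    rcases eq_or_ne f 0 with rfl | hf0
    · simp [hN, hχ.map_zero, hχ'.map_zero]
    by_cases hfm : f ∈ maximalIdeal R
    · have hρ0 : ρ f ≠ 0 := ((hρ.pos_iff f).mpr hfm).ne'
      have hρt : ρ f ≠ ⊤ := fun h => hf0 (hρ.finite f h)
      have hρ'0 : ρ' f ≠ 0 := ((hρ'.pos_iff f).mpr hfm).ne'
      have step : (ρ' f)⁻¹ ≤ ENNReal.ofReal K * (ρ f)⁻¹ := by
        have := ENNReal.inv_le_inv' (h2 f)
        rw [ENNReal.mul_inv (Or.inl hK0) (Or.inl hKt)] at this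
        calc (ρ' f)⁻¹ = ENNReal.ofReal K * ((ENNReal.ofReal K)⁻¹ * (ρ' f)⁻¹) := by
              rw [← mul_assoc, ENNReal.mul_inv_cancel hK0 hKt, one_mul]
          _ ≤ ENNReal.ofReal K * (ρ f)⁻¹ := mul_le_mul_right this _
      calc N f / ρ' f = N f * (ρ' f)⁻¹ := rfl
        _ ≤ N f * (ENNReal.ofReal K * (ρ f)⁻¹) := mul_le_mul_right step _
        _ = ENNReal.ofReal K * (N f / ρ f) := by rw [div_eq_mul_inv]; ring
    · have : N f = 0 := by
        simp [hN, mnorm_eq_zero_of_notMem hχ hfm, mnorm_eq_zero_of_notMem hχ' hfm]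
      simp [this]
  rw [dInfty_eq_iInf, dInfty_eq_iInf, ENNReal.mul_iInf_of_ne hK0 hKt]
  refine le_iInf fun lam => ?_
  refine iInf_le_of_le (K * lam) ?_
  rw [ENNReal.mul_iSup]
  refine iSup_le fun f => iSup_le fun hf => ?_
  have hmem : f ∈ {g : R | ENNReal.ofReal lam ≤ ρ g} := by
    rcases le_or_gt lam 0 with h | h
    · simp [Set.mem_setOf_eq, ENNReal.ofReal_eq_zero.mpr h]
    · have : ENNReal.ofReal K * ENNReal.ofReal lam ≤ ENNReal.ofReal K * ρ f := by
        rw [← ENNReal.ofReal_mul hK.le]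
        exact le_trans hf (h1 f)
      exact (ENNReal.mul_le_mul_iff_right hK0 hKt).mp this
  refine le_trans (hpt f) ?_
  refine le_iSup_of_le f ?_
  rw [ENNReal.mul_iSup]
  exact le_iSup_of_le hmem le_rfl

theorem norm_cmp {ρ ρ' : R → ℝ≥0∞} {c ε' : ℝ} (hc : 0 < c) (hε' : 0 < ε')
    (hcle : ∀ f : R, ρ f ≤ ENNReal.ofReal c⁻¹ * ordMax R f)
    (hε'le : ∀ f : R, ENNReal.ofReal ε' * ordMax R f ≤ ρ' f) :
    ∀ f : R, ρ f ≤ ENNReal.ofReal (c⁻¹ * ε'⁻¹) * ρ' f := by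
  intro f
  have hord : ordMax R f ≤ ENNReal.ofReal ε'⁻¹ * ρ' f := by
    calc ordMax R f = ENNReal.ofReal ε'⁻¹ * (ENNReal.ofReal ε' * ordMax R f) := by
          rw [← mul_assoc, ← ENNReal.ofReal_mul (by positivity), inv_mul_cancel₀ hε'.ne',
            ENNReal.ofReal_one, one_mul]
      _ ≤ ENNReal.ofReal ε'⁻¹ * ρ' f := mul_le_mul_right (hε'le f) _
  calc ρ f ≤ ENNReal.ofReal c⁻¹ * ordMax R f := hcle f
    _ ≤ ENNReal.ofReal c⁻¹ * (ENNReal.ofReal ε'⁻¹ * ρ' f) := mul_le_mul_right hord _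
    _ = ENNReal.ofReal (c⁻¹ * ε'⁻¹) * ρ' f := by
        rw [ENNReal.ofReal_mul (by positivity), mul_assoc]


/-- For two homogeneous linearly bounded `m`-norms `ρ`, `ρ'` on a Noetherian local
domain, the pseudometrics `d_{∞,ρ}` and `d_{∞,ρ'}` are equivalent:
`M⁻¹·d_{∞,ρ} ≤ d_{∞,ρ'} ≤ M·d_{∞,ρ}` for some constant `M > 0`. -/
theorem dInfty_equivalent [IsDomain R]
    (ρ ρ' : R → ℝ≥0∞)
    (hρ : IsMNorm R ρ) (hρlb : LinearlyBoundedNorm R ρ) (hρh : IsHomogeneousNorm R ρ)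
    (hρ' : IsMNorm R ρ') (hρ'lb : LinearlyBoundedNorm R ρ') (hρ'h : IsHomogeneousNorm R ρ') :
    ∃ M : ℝ, 0 < M ∧
      ∀ χ χ' : R → ℝ≥0∞, IsMNorm R χ → LinearlyBoundedNorm R χ →
        IsMNorm R χ' → LinearlyBoundedNorm R χ' →
        (ENNReal.ofReal M)⁻¹ * dInfty ρ χ χ' ≤ dInfty ρ' χ χ' ∧
        dInfty ρ' χ χ' ≤ ENNReal.ofReal M * dInfty ρ χ χ' := by
  obtain ⟨ε, hε, hεle⟩ := hρ.ord_le
  obtain ⟨ε', hε', hε'le⟩ := hρ'.ord_le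
  obtain ⟨c, hc, hcle⟩ := hρlb
  obtain ⟨c', hc', hc'le⟩ := hρ'lb
  set K : ℝ := max (c⁻¹ * ε'⁻¹) (c'⁻¹ * ε⁻¹) with hKdef
  have hKpos : 0 < K := lt_max_of_lt_left (by positivity)
  have hK0 : ENNReal.ofReal K ≠ 0 := by simp [hKpos, hKpos.le]
  have hKt : ENNReal.ofReal K ≠ ⊤ := ENNReal.ofReal_ne_top
  have h2 : ∀ f : R, ρ f ≤ ENNReal.ofReal K * ρ' f := fun f =>
    le_trans (norm_cmp hc hε' hcle hε'le f)
      (mul_le_mul_left (ENNReal.ofReal_le_ofReal (le_max_left _ _)) _)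
  have h1 : ∀ f : R, ρ' f ≤ ENNReal.ofReal K * ρ f := fun f =>
    le_trans (norm_cmp hc' hε hc'le hεle f)
      (mul_le_mul_left (ENNReal.ofReal_le_ofReal (le_max_right _ _)) _)
  refine ⟨K, hKpos, fun χ χ' hχ _ hχ' _ => ?_⟩
  have A := dInfty_le_mul hρ' hρ hχ hχ' hKpos h2 h1
  have B := dInfty_le_mul hρ hρ' hχ hχ' hKpos h1 h2
  refine ⟨?_, B⟩
  calc (ENNReal.ofReal K)⁻¹ * dInfty ρ χ χ'
      ≤ (ENNReal.ofReal K)⁻¹ * (ENNReal.ofReal K * dInfty ρ' χ χ') := mul_le_mul_right A _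
    _ = dInfty ρ' χ χ' := by rw [← mul_assoc, ENNReal.inv_mul_cancel hK0 hKt, one_mul]
end

section
/- Let (R, m) be a Noetherian local domain, let ρ be a homogeneous linearly bounded m-norm on R, and let χ, χ' be homogeneous linearly bounded m-norms on R. Then d_{∞,ρ}(χ, χ') = sup{ |χ(f) − χ'(f)|/ρ(f) : f ∈ m, f ≠ 0 }. -/
open IsLocalRing
open scoped ENNReal

variable {R : Type*} [CommRing R] [IsNoetherianRing R] [IsLocalRing R]

/-- For homogeneous linearly bounded `m`-norms `χ`, `χ'` (and a homogeneous linearly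
bounded reference norm `ρ`) on a Noetherian local domain,
`d_{∞,ρ}(χ, χ') = sup { |χ(f) − χ'(f)|/ρ(f) : f ∈ m, f ≠ 0 }`. -/
theorem dInfty_eq_iSup_of_homogeneous [IsDomain R]
    (ρ : R → ℝ≥0∞) (hρ : IsMNorm R ρ) (hρlb : LinearlyBoundedNorm R ρ)
    (hρh : IsHomogeneousNorm R ρ)
    (χ χ' : R → ℝ≥0∞)
    (hχ : IsMNorm R χ) (hχlb : LinearlyBoundedNorm R χ) (hχh : IsHomogeneousNorm R χ)
    (hχ' : IsMNorm R χ') (hχ'lb : LinearlyBoundedNorm R χ')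
    (hχ'h : IsHomogeneousNorm R χ') :
    dInfty ρ χ χ' =
      ⨆ f ∈ {g : R | g ∈ maximalIdeal R ∧ g ≠ 0},
        (max (χ f - χ' f) (χ' f - χ f)) / ρ f := by
  apply le_antisymm
  · -- limsup ≤ sup : eventually (λ ≥ 1) the inner sup is bounded by the RHS sup
    apply Filter.limsup_le_of_le (by isBoundedDefault)
    filter_upwards [Filter.eventually_ge_atTop (1 : ℝ)] with lam hlam
    apply iSup₂_le
    intro f hf
    rcases eq_or_ne f 0 with rfl | hf0
    · simp [hχ.map_zero, hχ'.map_zero]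
    · have hρpos : 0 < ρ f := lt_of_lt_of_le (by
        simpa using ENNReal.ofReal_pos.mpr (lt_of_lt_of_le one_pos hlam)) hf
      have hfm : f ∈ maximalIdeal R := (hρ.pos_iff f).mp hρpos
      exact le_iSup₂_of_le f ⟨hfm, hf0⟩ le_rfl
  · apply iSup₂_le
    intro f hf
    obtain ⟨hfm, hf0⟩ := hf
    have hρ0 : ρ f ≠ 0 := ((hρ.pos_iff f).mpr hfm).ne'
    have hρt : ρ f ≠ ⊤ := fun h => hf0 (hρ.finite f h)
    apply Filter.le_limsup_of_frequently_le'
    apply Filter.Eventually.frequently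
    apply Filter.Eventually.of_forall
    intro lam
    -- choose d with ofReal lam ≤ d * ρ f
    obtain ⟨n, hn⟩ := ENNReal.exists_nat_gt
      (ENNReal.div_lt_top ENNReal.ofReal_ne_top hρ0).ne
    set d : ℕ := n + 1 with hd
    have hd1 : 1 ≤ d := Nat.le_add_left 1 n
    have hdne : (d : ℝ≥0∞) ≠ 0 := Nat.cast_ne_zero.mpr (Nat.succ_ne_zero n)
    have hdnt : (d : ℝ≥0∞) ≠ ⊤ := ENNReal.natCast_ne_top d
    have hmem : ENNReal.ofReal lam ≤ ρ (f ^ d) := by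
      rw [hρh f d hd1]
      have h1 : ENNReal.ofReal lam < (n : ℝ≥0∞) * ρ f :=
        (ENNReal.div_lt_iff (Or.inl hρ0) (Or.inl hρt)).mp hn
      refine h1.le.trans (mul_le_mul_left ?_ _)
      exact_mod_cast Nat.le_succ n
    have key : max (χ (f ^ d) - χ' (f ^ d)) (χ' (f ^ d) - χ (f ^ d)) / ρ (f ^ d)
        = max (χ f - χ' f) (χ' f - χ f) / ρ f := by
      have hsub : ∀ a b : ℝ≥0∞, (d : ℝ≥0∞) * a - (d : ℝ≥0∞) * b
          = (d : ℝ≥0∞) * (a - b) := by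
        intro a b
        rw [ENNReal.mul_sub (fun _ _ => hdnt)]
      rw [hχh f d hd1, hχ'h f d hd1, hρh f d hd1, hsub, hsub, ← mul_max,
        ENNReal.mul_div_mul_left _ _ hdne hdnt]
    calc max (χ f - χ' f) (χ' f - χ f) / ρ f
        = max (χ (f ^ d) - χ' (f ^ d)) (χ' (f ^ d) - χ (f ^ d)) / ρ (f ^ d) := key.symm
      _ ≤ ⨆ g ∈ {g : R | ENNReal.ofReal lam ≤ ρ g},
            max (χ g - χ' g) (χ' g - χ g) / ρ g := le_iSup₂_of_le (f ^ d) hmem le_rfl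
end

section
/- Let (R, m) be a Noetherian local domain, let ρ be a homogeneous linearly bounded m-norm on R, and let χ, χ' be linearly bounded m-norms on R. Define the homogenizations χ̂(f) := lim_{k→∞} χ(f^k)/k and χ̂'(f) := lim_{k→∞} χ'(f^k)/k (these limits exist and equal sup_k χ(f^k)/k, resp. sup_k χ'(f^k)/k, since k ↦ χ(f^k) is superadditive). Then d_{∞,ρ}(χ̂, χ̂') ≤ d_{∞,ρ}(χ, χ'). -/
open IsLocalRing
open scoped ENNReal

variable {R : Type*} [CommRing R] [IsNoetherianRing R] [IsLocalRing R]

/-- Homogenization decreases `d_∞`: if `χ̂(f) = lim_k χ(f^k)/k` and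
`χ̂'(f) = lim_k χ'(f^k)/k` (the limits existing pointwise), then
`d_{∞,ρ}(χ̂, χ̂') ≤ d_{∞,ρ}(χ, χ')`. -/
theorem dInfty_homogenization_le [IsDomain R]
    (ρ : R → ℝ≥0∞) (hρ : IsMNorm R ρ) (hρlb : LinearlyBoundedNorm R ρ)
    (hρh : IsHomogeneousNorm R ρ)
    (χ χ' : R → ℝ≥0∞)
    (hχ : IsMNorm R χ) (hχlb : LinearlyBoundedNorm R χ)
    (hχ' : IsMNorm R χ') (hχ'lb : LinearlyBoundedNorm R χ')
    (χh χh' : R → ℝ≥0∞)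
    (hχh : ∀ f : R, Filter.Tendsto (fun k : ℕ => χ (f ^ k) / (k : ℝ≥0∞))
      Filter.atTop (nhds (χh f)))
    (hχh' : ∀ f : R, Filter.Tendsto (fun k : ℕ => χ' (f ^ k) / (k : ℝ≥0∞))
      Filter.atTop (nhds (χh' f))) :
    dInfty ρ χh χh' ≤ dInfty ρ χ χ' := by
  unfold dInfty
  refine Filter.limsup_le_limsup ?_
  filter_upwards [Filter.eventually_ge_atTop (1:ℝ)] with lam hlam
  set S := ⨆ g ∈ {g : R | ENNReal.ofReal lam ≤ ρ g},
      (max (χ g - χ' g) (χ' g - χ g)) / ρ g with hSdef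
  refine iSup₂_le fun f hf => ?_
  by_cases hf0 : f = 0
  · subst hf0
    have htop : ∀ (ψ : R → ℝ≥0∞) (ψh : R → ℝ≥0∞), IsMNorm R ψ →
        (∀ f : R, Filter.Tendsto (fun k : ℕ => ψ (f ^ k) / (k : ℝ≥0∞))
          Filter.atTop (nhds (ψh f))) → ψh 0 = ⊤ := by
      intro ψ ψh hψ hψh
      have heq : (fun k : ℕ => ψ ((0:R) ^ k) / (k : ℝ≥0∞)) =ᶠ[Filter.atTop]
          (fun _ => (⊤ : ℝ≥0∞)) := by
        filter_upwards [Filter.eventually_ge_atTop 1] with k hk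
        rw [zero_pow (by omega), hψ.map_zero,
          ENNReal.top_div_of_ne_top (ENNReal.natCast_ne_top k)]
      exact tendsto_nhds_unique (hψh 0) (Filter.Tendsto.congr' heq.symm tendsto_const_nhds)
    have h1 : χh (0:R) = ⊤ := htop χ χh hχ hχh
    have h2 : χh' (0:R) = ⊤ := htop χ' χh' hχ' hχh'
    simp [h1, h2, ENNReal.sub_top, ENNReal.zero_div]
  · have hρf_ne_top : ρ f ≠ ⊤ := fun h => hf0 (hρ.finite f h)
    have hρf1 : (1 : ℝ≥0∞) ≤ ρ f := by
      refine le_trans ?_ hf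
      rw [← ENNReal.ofReal_one]
      exact ENNReal.ofReal_le_ofReal hlam
    have hρf_ne0 : ρ f ≠ 0 := by
      intro h; rw [h] at hρf1; simp at hρf1
    have hbound : ∀ k : ℕ, 1 ≤ k →
        max (χ (f ^ k) - χ' (f ^ k)) (χ' (f ^ k) - χ (f ^ k)) ≤ S * ((k : ℝ≥0∞) * ρ f) := by
      intro k hk
      have hρk : ρ (f ^ k) = (k : ℝ≥0∞) * ρ f := hρh f k hk
      have hmem : f ^ k ∈ {g : R | ENNReal.ofReal lam ≤ ρ g} := by
        simp only [Set.mem_setOf_eq, hρk]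
        calc ENNReal.ofReal lam ≤ ρ f := hf
          _ = 1 * ρ f := (one_mul _).symm
          _ ≤ (k : ℝ≥0∞) * ρ f := by
              gcongr
              exact_mod_cast hk
      have hle : (max (χ (f ^ k) - χ' (f ^ k)) (χ' (f ^ k) - χ (f ^ k))) / ρ (f ^ k) ≤ S :=
        le_biSup (fun g => (max (χ g - χ' g) (χ' g - χ g)) / ρ g) hmem
      have hρk_ne0 : ρ (f ^ k) ≠ 0 := by
        rw [hρk]
        exact mul_ne_zero (Nat.cast_ne_zero.mpr (by omega)) hρf_ne0
      have hρk_ne_top : ρ (f ^ k) ≠ ⊤ := fun h => (pow_ne_zero k hf0) (hρ.finite _ h)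
      rw [ENNReal.div_le_iff_le_mul (Or.inl hρk_ne0) (Or.inl hρk_ne_top)] at hle
      rwa [hρk] at hle
    have key : ∀ (ψ ψ' : R → ℝ≥0∞) (ψh ψh' : R → ℝ≥0∞),
        (∀ k : ℕ, 1 ≤ k → ψ (f ^ k) - ψ' (f ^ k) ≤ S * ((k : ℝ≥0∞) * ρ f)) →
        (Filter.Tendsto (fun k : ℕ => ψ (f ^ k) / (k : ℝ≥0∞)) Filter.atTop (nhds (ψh f))) →
        (Filter.Tendsto (fun k : ℕ => ψ' (f ^ k) / (k : ℝ≥0∞)) Filter.atTop (nhds (ψh' f))) →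
        ψh f - ψh' f ≤ S * ρ f := by
      intro ψ ψ' ψh ψh' hb ht ht'
      rw [tsub_le_iff_right]
      refine le_of_tendsto_of_tendsto ht (Filter.Tendsto.const_add (S * ρ f) ht') ?_
      filter_upwards [Filter.eventually_ge_atTop 1] with k hk
      have hk0 : (k : ℝ≥0∞) ≠ 0 := Nat.cast_ne_zero.mpr (by omega)
      have hktop : (k : ℝ≥0∞) ≠ ⊤ := ENNReal.natCast_ne_top k
      have h1 : ψ (f ^ k) ≤ S * ((k : ℝ≥0∞) * ρ f) + ψ' (f ^ k) :=
        tsub_le_iff_right.mp (hb k hk)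
      calc ψ (f ^ k) / (k : ℝ≥0∞)
          ≤ (S * ((k : ℝ≥0∞) * ρ f) + ψ' (f ^ k)) / (k : ℝ≥0∞) :=
            ENNReal.div_le_div_right h1 _
        _ = S * ρ f + ψ' (f ^ k) / (k : ℝ≥0∞) := by
            rw [ENNReal.add_div]
            congr 1
            rw [show S * ((k : ℝ≥0∞) * ρ f) = S * ρ f * (k : ℝ≥0∞) by ring,
              mul_div_assoc, ENNReal.div_self hk0 hktop, mul_one]
    have hA : χh f - χh' f ≤ S * ρ f :=
      key χ χ' χh χh' (fun k hk => le_trans (le_max_left _ _) (hbound k hk)) (hχh f) (hχh' f)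
    have hB : χh' f - χh f ≤ S * ρ f :=
      key χ' χ χh' χh (fun k hk => le_trans (le_max_right _ _) (hbound k hk)) (hχh' f) (hχh f)
    rw [ENNReal.div_le_iff_le_mul (Or.inl hρf_ne0) (Or.inl hρf_ne_top)]
    exact max_le hA hB
end
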